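/- arXiv:1209.2784 — 5 statements merged into one kernel-verified Lean document; each statement's English description precedes it below -/
import Mathlib

section
/- Let (Ω, 𝔉, μ) be a probability space, let I be a finite nonempty index set with |I| = C, for each i ∈ I let f_i : Ω → ℝ be measurable, let B > 0 be a real number, let T ≥ 1 be a natural number, and let δ ∈ (0, 1). Then with μ^{⊗T}-probability at least 1 − δ/2 over T independent draws (ω₁, …, ω_T) from μ, the following holds simultaneously for every i ∈ I and every real γ ∈ [0, ⌈B⌉]: if f_i(ω_t) ≤ γ for all t ∈ {1, …, T}, then μ{ω : f_i(ω) > γ + 1/T} ≤ (log(2C/δ) + log⌈B⌉ + log(T + 1)) / T. -/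
/-!
If a fixed event `s` has `μ sᶜ > ε`, then `T` independent draws all land in `s` with
probability at most `(1 - ε)^T ≤ exp (-ε T)`. A union bound over the finite family of events
`{f i ≤ k / T}`, for `i ∈ I` and `k ≤ ⌈B⌉ T`, shows that with probability at least
`1 - C (⌈B⌉ T + 1) exp (-ε T)` none of the events of tail mass above `ε` contains all the draws.
For an arbitrary level `γ ∈ [0, ⌈B⌉]`, the grid point `⌈γ T⌉ / T` lies in `[γ, γ + 1/T]`, so the
tail of `f i` beyond `γ + 1/T` is controlled by the tail beyond that grid point. The choice
`ε T = log (2C/δ) + log ⌈B⌉ + log (T + 1)` makes the union bound at most `δ/2`.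
-/

open MeasureTheory Set

section TailBound

variable {Ω : Type*} [MeasurableSpace Ω] (μ : Measure Ω) [IsProbabilityMeasure μ]
  {ι : Type*} [Fintype ι]

theorem measure_pi_univ_pi_le_exp_neg {s : Set Ω} (hs : MeasurableSet s) {ε : ℝ}
    (hε : ε ≤ μ.real sᶜ) :
    Measure.pi (fun _ : ι => μ) (univ.pi fun _ => s) ≤
      ENNReal.ofReal (Real.exp (-(ε * Fintype.card ι))) := by
  have hs_le : μ s ≤ ENNReal.ofReal (Real.exp (-ε)) := by
    rw [← ofReal_measureReal]
    apply ENNReal.ofReal_le_ofReal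
    linarith [probReal_compl_eq_one_sub (μ := μ) hs, Real.add_one_le_exp (-ε)]
  calc Measure.pi (fun _ : ι => μ) (univ.pi fun _ => s) = μ s ^ Fintype.card ι := by
        rw [Measure.pi_pi, Finset.prod_const, Finset.card_univ]
    _ ≤ ENNReal.ofReal (Real.exp (-ε)) ^ Fintype.card ι := by gcongr
    _ = ENNReal.ofReal (Real.exp (-(ε * Fintype.card ι))) := by
        rw [← ENNReal.ofReal_pow (Real.exp_nonneg _), ← Real.exp_nat_mul]
        ring_nf

theorem one_sub_card_mul_exp_neg_le_measure_pi {J : Type*} [Fintype J] {s : J → Set Ω}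
    (hs : ∀ j, MeasurableSet (s j)) (ε : ℝ) :
    1 - Fintype.card J * ENNReal.ofReal (Real.exp (-(ε * Fintype.card ι))) ≤
      Measure.pi (fun _ : ι => μ) {x | ∀ j, (∀ t, x t ∈ s j) → μ.real (s j)ᶜ ≤ ε} := by
  set ν := Measure.pi (fun _ : ι => μ)
  set good := {x : ι → Ω | ∀ j, (∀ t, x t ∈ s j) → μ.real (s j)ᶜ ≤ ε}
  have bad_le : ν goodᶜ ≤ Fintype.card J * ENNReal.ofReal (Real.exp (-(ε * Fintype.card ι))) := by
    have hbad : goodᶜ ⊆ ⋃ j, {x | ε < μ.real (s j)ᶜ ∧ ∀ t, x t ∈ s j} := by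
      intro x hx
      simp only [good, mem_compl_iff, mem_ofPred_eq, not_forall, not_le] at hx
      obtain ⟨j, hxj, hεj⟩ := hx
      exact mem_iUnion.mpr ⟨j, hεj, hxj⟩
    have hterm (j : J) : ν {x | ε < μ.real (s j)ᶜ ∧ ∀ t, x t ∈ s j} ≤
        ENNReal.ofReal (Real.exp (-(ε * Fintype.card ι))) := by
      by_cases hεj : ε < μ.real (s j)ᶜ
      · simpa [hεj, Set.pi] using measure_pi_univ_pi_le_exp_neg μ (hs j) hεj.le
      · simp [hεj]
    calc ν goodᶜ ≤ ν (⋃ j, {x | ε < μ.real (s j)ᶜ ∧ ∀ t, x t ∈ s j}) := measure_mono hbad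
      _ ≤ ∑ j, ν {x | ε < μ.real (s j)ᶜ ∧ ∀ t, x t ∈ s j} := measure_iUnion_fintype_le _ _
      _ ≤ ∑ _j : J, ENNReal.ofReal (Real.exp (-(ε * Fintype.card ι))) :=
        Finset.sum_le_sum fun j _ => hterm j
      _ = _ := by simp
  calc 1 - _ ≤ 1 - ν goodᶜ := tsub_le_tsub_left bad_le 1
    _ ≤ ν good := by
      rw [tsub_le_iff_right, ← measure_univ (μ := ν)]
      exact measure_univ_le_add_compl good

end TailBound

theorem exists_nat_le_mul_div_mem_Icc {γ : ℝ} {b T : ℕ} (hγ0 : 0 ≤ γ) (hγb : γ ≤ b)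
    (hT : 0 < T) : ∃ k ≤ b * T, (k : ℝ) / T ∈ Icc γ (γ + 1 / T) := by
  have hT' : (0 : ℝ) < T := by exact_mod_cast hT
  refine ⟨⌈γ * T⌉₊, ?_, ?_, ?_⟩
  · exact Nat.ceil_le.mpr (by push_cast; gcongr)
  · rw [le_div_iff₀ hT']
    exact Nat.le_ceil _
  · rw [div_le_iff₀ hT', add_mul, one_div_mul_cancel hT'.ne']
    exact (Nat.ceil_lt_add_one (by positivity)).le

theorem mul_exp_neg_log_add_log_add_log_le {C b T δ : ℝ} (hC : 0 ≤ C) (hb : 1 ≤ b)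
    (hT : 0 ≤ T) (hδ : 0 < δ) :
    C * (b * T + 1) * Real.exp (-(Real.log (2 * C / δ) + Real.log b + Real.log (T + 1))) ≤
      δ / 2 := by
  rcases hC.eq_or_lt with rfl | hC
  · simp only [zero_mul]
    positivity
  have hexp : Real.exp (-(Real.log (2 * C / δ) + Real.log b + Real.log (T + 1))) =
      δ / (2 * C * b * (T + 1)) := by
    rw [Real.exp_neg, Real.exp_add, Real.exp_add, Real.exp_log (by positivity),
      Real.exp_log (by positivity), Real.exp_log (by positivity)]
    field_simp
  rw [hexp]
  calc C * (b * T + 1) * (δ / (2 * C * b * (T + 1)))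
      ≤ C * (b * (T + 1)) * (δ / (2 * C * b * (T + 1))) := by gcongr; linarith
    _ = δ / 2 := by field_simp

theorem stmt_4_general {Ω : Type*} [MeasurableSpace Ω] (μ : Measure Ω)
    [IsProbabilityMeasure μ] {I : Type*} [Fintype I]
    (C : ℕ) (hC : Fintype.card I = C)
    (f : I → Ω → ℝ) (hf : ∀ i, Measurable (f i))
    (B : ℝ) (hB : 0 < B) (T : ℕ) (hT : 1 ≤ T) (δ : ℝ) (hδ0 : 0 < δ) :
    ENNReal.ofReal (1 - δ / 2) ≤
      Measure.pi (fun _ : Fin T => μ)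
        {x | ∀ i : I, ∀ γ : ℝ, 0 ≤ γ → γ ≤ (⌈B⌉ : ℝ) →
          (∀ t, f i (x t) ≤ γ) →
          (μ {ω | γ + 1 / T < f i ω}).toReal ≤
            (Real.log (2 * C / δ) + Real.log (⌈B⌉ : ℝ) + Real.log (T + 1)) / T} := by
  set b := ⌈B⌉₊
  rw [← natCast_ceil_eq_intCast_ceil hB.le]
  have hT' : (0 : ℝ) < T := by exact_mod_cast hT
  set L := Real.log (2 * C / δ) + Real.log (b : ℝ) + Real.log (T + 1)
  have htail := one_sub_card_mul_exp_neg_le_measure_pi μ (ι := Fin T)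
    (s := fun j : I × Fin (b * T + 1) => {ω | f j.1 ω ≤ (j.2 : ℝ) / T})
    (fun j => measurableSet_le (hf j.1) measurable_const) (L / T)
  rw [Fintype.card_fin, div_mul_cancel₀ _ hT'.ne', Fintype.card_prod, Fintype.card_fin, hC] at htail
  refine le_trans ?_ (htail.trans (measure_mono ?_))
  · rw [ENNReal.ofReal_sub _ (by positivity), ENNReal.ofReal_one]
    refine tsub_le_tsub_left ?_ 1
    rw [← ENNReal.ofReal_natCast, ← ENNReal.ofReal_mul (by positivity)]
    refine ENNReal.ofReal_le_ofReal ?_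
    push_cast
    exact mul_exp_neg_log_add_log_add_log_le (by positivity)
      (by exact_mod_cast Nat.one_le_ceil_iff.mpr hB) hT'.le hδ0
  · intro x hx i γ hγ0 hγb hxγ
    obtain ⟨k, hk, hγk, hkγ⟩ := exists_nat_le_mul_div_mem_Icc hγ0 hγb hT
    calc (μ {ω | γ + 1 / T < f i ω}).toReal ≤ μ.real {ω | f i ω ≤ (k : ℝ) / T}ᶜ := by
          refine ENNReal.toReal_mono (measure_ne_top _ _) (measure_mono fun ω hω => ?_)
          exact not_le.mpr (hkγ.trans_lt hω)
      _ ≤ L / T := hx (i, ⟨k, Nat.lt_succ_of_le hk⟩) fun t => (hxγ t).trans hγk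

/-- Probabilistic core of Theorem 1: with probability at least `1 - δ/2` over `T`
independent draws, simultaneously for every `i` in a finite family of size `C` and every
`γ ∈ [0, ⌈B⌉]`, if all observed values of `f i` are at most `γ`, then
`μ{f i > γ + 1/T} ≤ (log(2C/δ) + log⌈B⌉ + log(T+1))/T`. -/
theorem stmt_4 {Ω : Type*} [MeasurableSpace Ω] (μ : Measure Ω)
    [IsProbabilityMeasure μ] {I : Type*} [Fintype I] [Nonempty I]
    (C : ℕ) (hC : Fintype.card I = C)
    (f : I → Ω → ℝ) (hf : ∀ i, Measurable (f i))
    (B : ℝ) (hB : 0 < B) (T : ℕ) (hT : 1 ≤ T) (δ : ℝ) (hδ0 : 0 < δ) (hδ1 : δ < 1) :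
    ENNReal.ofReal (1 - δ / 2) ≤
      Measure.pi (fun _ : Fin T => μ)
        {x | ∀ i : I, ∀ γ : ℝ, 0 ≤ γ → γ ≤ (⌈B⌉ : ℝ) →
          (∀ t, f i (x t) ≤ γ) →
          (μ {ω | γ + 1 / T < f i ω}).toReal ≤
            (Real.log (2 * C / δ) + Real.log (⌈B⌉ : ℝ) + Real.log (T + 1)) / T} :=
  stmt_4_general μ C hC f hf B hB T hT δ hδ0
end

section
/- Let T ≥ 1 be a natural number and let ℓ ∈ ℝ^T have nonnegative entries. If α ≥ T, then V_α(ℓ) := inf_{b ≥ 0} φ_α(ℓ, b) = (1/α) Σ_{t=1}^T ℓ_t, and b = 0 attains the infimum; moreover, if α > T then b = 0 is the unique minimizer, i.e. φ_α(ℓ, b) > (1/α) Σ_{t=1}^T ℓ_t for every b > 0. -/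
/-- Case (1) of the α-minimax analysis: if `α ≥ T`, then
`V_α(ℓ) = (1/α) ∑ ℓ t`, attained at `b = 0`; moreover if `α > T` then `b = 0` is
the unique minimizer, i.e. `φ_α(ℓ, b) > (1/α) ∑ ℓ t` for every `b > 0`. -/
theorem stmt_8 (T : ℕ) (hT : 1 ≤ T) (α : ℝ)
    (ℓ : Fin T → ℝ) (hℓ : ∀ t, 0 ≤ ℓ t) (hα : (T : ℝ) ≤ α) :
    IsLeast {v : ℝ | ∃ b : ℝ, 0 ≤ b ∧ v = b + (1 / α) * ∑ t, max 0 (ℓ t - b)}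
        ((1 / α) * ∑ t, ℓ t)
      ∧ (0 : ℝ) + (1 / α) * ∑ t, max 0 (ℓ t - 0) = (1 / α) * ∑ t, ℓ t
      ∧ ((T : ℝ) < α → ∀ b : ℝ, 0 < b →
          (1 / α) * ∑ t, ℓ t < b + (1 / α) * ∑ t, max 0 (ℓ t - b)) := by
  have hT0 : (0 : ℝ) < (T : ℝ) := by exact_mod_cast hT
  have hα0 : (0 : ℝ) < α := lt_of_lt_of_le hT0 hα
  have hinv : (0 : ℝ) < 1 / α := by positivity
  have hprod : (1 / α) * α = 1 := by field_simp
  have hzero : (0 : ℝ) + (1 / α) * ∑ t, max 0 (ℓ t - 0) = (1 / α) * ∑ t, ℓ t := by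
    have h : (∑ t, max 0 (ℓ t - 0)) = ∑ t, ℓ t :=
      Finset.sum_congr rfl fun t _ => by rw [sub_zero]; exact max_eq_right (hℓ t)
    rw [h, zero_add]
  have hkey : ∀ b : ℝ, (∑ t, ℓ t) - (T : ℝ) * b ≤ ∑ t, max 0 (ℓ t - b) := by
    intro b
    have h1 : ∑ t, (ℓ t - b) ≤ ∑ t, max 0 (ℓ t - b) :=
      Finset.sum_le_sum fun t _ => le_max_right _ _
    have h2 : ∑ t, (ℓ t - b) = (∑ t, ℓ t) - (T : ℝ) * b := by
      rw [Finset.sum_sub_distrib]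
      simp [Finset.card_univ, mul_comm]
    linarith [h1, h2.symm ▸ h1]
  refine ⟨⟨⟨0, le_refl 0, hzero.symm⟩, ?_⟩, hzero, ?_⟩
  · rintro v ⟨b, hb, rfl⟩
    have h := hkey b
    have h3 := mul_le_mul_of_nonneg_left h (le_of_lt hinv)
    have h4 : (T : ℝ) * b ≤ α * b := mul_le_mul_of_nonneg_right hα hb
    nlinarith [mul_le_mul_of_nonneg_left h4 (le_of_lt hinv)]
  · intro hlt b hb
    have h := hkey b
    have h3 := mul_le_mul_of_nonneg_left h (le_of_lt hinv)
    have h4 : (T : ℝ) * b < α * b := mul_lt_mul_of_pos_right hlt hb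
    nlinarith [mul_lt_mul_of_pos_left h4 hinv]
end

section
/- Let T ≥ 1 be a natural number and let ℓ ∈ ℝ^T have nonnegative entries. If 0 < α ≤ 1, then V_α(ℓ) := inf_{b ≥ 0} φ_α(ℓ, b) = max_{t ∈ {1,…,T}} ℓ_t, and the infimum is attained at b = max_t ℓ_t. -/
/-- Case (3) of the α-minimax analysis: if `0 < α ≤ 1`, then
`V_α(ℓ) = max_t ℓ t`, and the infimum is attained at `b = max_t ℓ t`. -/
theorem stmt_9 (T : ℕ) (hT : 1 ≤ T) (α : ℝ) (hα0 : 0 < α) (hα1 : α ≤ 1)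
    (ℓ : Fin T → ℝ) (hℓ : ∀ t, 0 ≤ ℓ t) :
    IsLeast {v : ℝ | ∃ b : ℝ, 0 ≤ b ∧ v = b + (1 / α) * ∑ t, max 0 (ℓ t - b)}
        (Finset.univ.sup' ⟨⟨0, hT⟩, Finset.mem_univ _⟩ ℓ)
      ∧ (Finset.univ.sup' ⟨⟨0, hT⟩, Finset.mem_univ _⟩ ℓ)
          + (1 / α) * ∑ t, max 0 (ℓ t - Finset.univ.sup' ⟨⟨0, hT⟩, Finset.mem_univ _⟩ ℓ)
        = Finset.univ.sup' ⟨⟨0, hT⟩, Finset.mem_univ _⟩ ℓ := by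
  set M := Finset.univ.sup' ⟨⟨0, hT⟩, Finset.mem_univ _⟩ ℓ with hM
  have hle : ∀ t, ℓ t ≤ M := fun t => Finset.le_sup' ℓ (Finset.mem_univ t)
  have hM0 : 0 ≤ M := le_trans (hℓ ⟨0, hT⟩) (hle ⟨0, hT⟩)
  have hzero : (∑ t, max 0 (ℓ t - M)) = 0 := by
    apply Finset.sum_eq_zero
    intro t _
    simp [max_eq_left, sub_nonpos.mpr (hle t)]
  have hval : M + (1 / α) * ∑ t, max 0 (ℓ t - M) = M := by
    rw [hzero]; ring
  refine ⟨⟨⟨M, hM0, hval.symm⟩, ?_⟩, hval⟩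
  rintro v ⟨b, hb, rfl⟩
  obtain ⟨t₀, _, ht₀⟩ := Finset.exists_mem_eq_sup' ⟨⟨0, hT⟩, Finset.mem_univ _⟩ ℓ
  have hsumnn : 0 ≤ ∑ t, max 0 (ℓ t - b) :=
    Finset.sum_nonneg fun t _ => le_max_left _ _
  have h1 : ℓ t₀ - b ≤ ∑ t, max 0 (ℓ t - b) :=
    le_trans (le_max_right 0 _) (Finset.single_le_sum (f := fun t => max 0 (ℓ t - b)) (fun t _ => le_max_left _ _) (Finset.mem_univ t₀))
  have hinv : (1:ℝ) ≤ 1 / α := (le_div_iff₀ hα0).mpr (by linarith)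
  have h2 : ∑ t, max 0 (ℓ t - b) ≤ (1 / α) * ∑ t, max 0 (ℓ t - b) :=
    le_mul_of_one_le_left hsumnn hinv
  calc M = ℓ t₀ := ht₀
    _ ≤ b + ∑ t, max 0 (ℓ t - b) := by linarith
    _ ≤ b + (1 / α) * ∑ t, max 0 (ℓ t - b) := by linarith
end

section
/- Let T ≥ 1 be a natural number, let ℓ ∈ ℝ^T have nonnegative entries, and let S ⊊ {1, …, T} be a nonempty proper subset with |S| = k. Suppose ρ > 0 and min_{t ∈ S} ℓ_t ≥ max_{t ∉ S} ℓ_t + ρ, and suppose k < α. Then, writing m₀ := max_{t ∈ {1,…,T}} ℓ_t, one has V_α(ℓ) := inf_{b ≥ 0} φ_α(ℓ, b) ≤ φ_α(ℓ, m₀ − ρ) ≤ m₀ − ρ(1 − k/α) < m₀; in particular the α-minimax value is strictly smaller than the hard maximum of the empirical risks. -/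
/-- Case (2) of the α-minimax analysis: if a nonempty proper set `S` of `k` outlier
tasks has empirical risks separated by `ρ > 0` from the risks of the remaining tasks,
and `k < α`, then with `m₀ = max_t ℓ t` one has
`V_α(ℓ) ≤ φ_α(ℓ, m₀ - ρ) ≤ m₀ - ρ(1 - k/α) < m₀`. -/
theorem stmt_10 (T : ℕ) (hT : 1 ≤ T) (α : ℝ)
    (ℓ : Fin T → ℝ) (hℓ : ∀ t, 0 ≤ ℓ t)
    (S : Finset (Fin T)) (hS : S.Nonempty) (hSc : Sᶜ.Nonempty)
    (k : ℕ) (hk : S.card = k) (ρ : ℝ) (hρ : 0 < ρ)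
    (hsep : Sᶜ.sup' hSc ℓ + ρ ≤ S.inf' hS ℓ) (hkα : (k : ℝ) < α) :
    sInf {v : ℝ | ∃ b : ℝ, 0 ≤ b ∧ v = b + (1 / α) * ∑ t, max 0 (ℓ t - b)}
        ≤ (Finset.univ.sup' ⟨⟨0, hT⟩, Finset.mem_univ _⟩ ℓ - ρ)
          + (1 / α) * ∑ t, max 0 (ℓ t - (Finset.univ.sup' ⟨⟨0, hT⟩, Finset.mem_univ _⟩ ℓ - ρ))
      ∧ (Finset.univ.sup' ⟨⟨0, hT⟩, Finset.mem_univ _⟩ ℓ - ρ)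
          + (1 / α) * ∑ t, max 0 (ℓ t - (Finset.univ.sup' ⟨⟨0, hT⟩, Finset.mem_univ _⟩ ℓ - ρ))
        ≤ Finset.univ.sup' ⟨⟨0, hT⟩, Finset.mem_univ _⟩ ℓ - ρ * (1 - k / α)
      ∧ Finset.univ.sup' ⟨⟨0, hT⟩, Finset.mem_univ _⟩ ℓ - ρ * (1 - k / α)
        < Finset.univ.sup' ⟨⟨0, hT⟩, Finset.mem_univ _⟩ ℓ := by
  set m₀ := Finset.univ.sup' ⟨⟨0, hT⟩, Finset.mem_univ _⟩ ℓ with hm₀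
  have hα : (0:ℝ) < α := by
    have : (0:ℝ) ≤ (k:ℝ) := Nat.cast_nonneg k
    linarith
  have hmle : ∀ t, ℓ t ≤ m₀ := fun t => Finset.le_sup' ℓ (Finset.mem_univ t)
  -- m₀ - ρ ≥ 0
  obtain ⟨s, hsS⟩ := id hS
  have hinf : ρ ≤ S.inf' hS ℓ := by
    have h0 : 0 ≤ Sᶜ.sup' hSc ℓ := by
      obtain ⟨u, hu⟩ := hSc
      exact le_trans (hℓ u) (Finset.le_sup' ℓ hu)
    linarith
  have hmρ : 0 ≤ m₀ - ρ := by
    have h1 : S.inf' hS ℓ ≤ ℓ s := Finset.inf'_le ℓ hsS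
    have := hmle s
    linarith
  -- sum bound
  have hsum : ∑ t, max 0 (ℓ t - (m₀ - ρ)) ≤ (k:ℝ) * ρ := by
    rw [← Finset.sum_add_sum_compl S]
    have h1 : ∑ t ∈ S, max 0 (ℓ t - (m₀ - ρ)) ≤ ∑ t ∈ S, ρ := by
      refine Finset.sum_le_sum fun t ht => ?_
      have := hmle t
      exact max_le hρ.le (by linarith)
    have h2 : ∑ t ∈ Sᶜ, max 0 (ℓ t - (m₀ - ρ)) = 0 := by
      refine Finset.sum_eq_zero fun t ht => ?_
      have h3 : ℓ t ≤ Sᶜ.sup' hSc ℓ := Finset.le_sup' ℓ ht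
      have h4 : S.inf' hS ℓ ≤ ℓ s := Finset.inf'_le ℓ hsS
      have := hmle s
      have : ℓ t - (m₀ - ρ) ≤ 0 := by linarith
      exact max_eq_left this
    rw [h2]
    simpa [hk] using h1.trans_eq (by simp [hk, mul_comm])
  have hsumnn : ∀ b : ℝ, (0:ℝ) ≤ ∑ t, max 0 (ℓ t - b) := fun b =>
    Finset.sum_nonneg fun t _ => le_max_left _ _
  refine ⟨?_, ?_, ?_⟩
  · apply csInf_le
    · refine ⟨0, fun v hv => ?_⟩
      obtain ⟨b, hb, rfl⟩ := hv
      have := hsumnn b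
      positivity
    · exact ⟨m₀ - ρ, hmρ, rfl⟩
  · have : (1 / α) * ∑ t, max 0 (ℓ t - (m₀ - ρ)) ≤ (1 / α) * ((k:ℝ) * ρ) :=
      mul_le_mul_of_nonneg_left hsum (by positivity)
    have heq : (1 / α) * ((k:ℝ) * ρ) = ρ * (k / α) := by ring
    nlinarith [this]
  · have hfrac : (k:ℝ) / α < 1 := (div_lt_one hα).mpr hkα
    nlinarith
end

section
/- Let T ≥ 1 be a natural number and let ℓ ∈ ℝ^T have nonnegative entries. If 0 < α ≤ T, then (1/T) Σ_{t=1}^T ℓ_t ≤ V_α(ℓ) ≤ max_{t ∈ {1,…,T}} ℓ_t, where V_α(ℓ) := inf_{b ≥ 0} φ_α(ℓ, b). -/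
/-- For `0 < α ≤ T`, the α-minimax value lies between the task-wise mean and the
task-wise maximum of the empirical risks. -/
theorem stmt_11 (T : ℕ) (hT : 1 ≤ T) (α : ℝ) (hα0 : 0 < α) (hαT : α ≤ (T : ℝ))
    (ℓ : Fin T → ℝ) (hℓ : ∀ t, 0 ≤ ℓ t) :
    (1 / T : ℝ) * ∑ t, ℓ t
        ≤ sInf {v : ℝ | ∃ b : ℝ, 0 ≤ b ∧ v = b + (1 / α) * ∑ t, max 0 (ℓ t - b)}
      ∧ sInf {v : ℝ | ∃ b : ℝ, 0 ≤ b ∧ v = b + (1 / α) * ∑ t, max 0 (ℓ t - b)}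
        ≤ Finset.univ.sup' ⟨⟨0, hT⟩, Finset.mem_univ _⟩ ℓ := by
  have hT0 : (0:ℝ) < (T:ℝ) := by exact_mod_cast Nat.lt_of_lt_of_le Nat.zero_lt_one hT
  set S : Set ℝ := {v : ℝ | ∃ b : ℝ, 0 ≤ b ∧ v = b + (1 / α) * ∑ t, max 0 (ℓ t - b)} with hS
  -- lower bound for every element of S
  have hlow : ∀ v ∈ S, (1 / T : ℝ) * ∑ t, ℓ t ≤ v := by
    rintro v ⟨b, hb, rfl⟩
    have hsum_ge : (∑ t, ℓ t) - (T:ℝ) * b ≤ ∑ t, max 0 (ℓ t - b) := by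
      have : ∑ t, (ℓ t - b) ≤ ∑ t, max 0 (ℓ t - b) :=
        Finset.sum_le_sum fun t _ => le_max_right _ _
      have hsub : ∑ t : Fin T, (ℓ t - b) = (∑ t, ℓ t) - (T:ℝ) * b := by
        rw [Finset.sum_sub_distrib, Finset.sum_const, Finset.card_univ, Fintype.card_fin,
          nsmul_eq_mul]
      linarith [this, hsub.ge, hsub.le]
    have hsum_nonneg : 0 ≤ ∑ t, max 0 (ℓ t - b) :=
      Finset.sum_nonneg fun t _ => le_max_left _ _
    have hαinv : (0:ℝ) < 1 / α := by positivity
    by_cases hcase : (∑ t, ℓ t) - (T:ℝ) * b ≤ 0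
    · have h1 : (1 / T : ℝ) * ∑ t, ℓ t ≤ b := by
        rw [div_mul_eq_mul_div, one_mul, div_le_iff₀ hT0]
        nlinarith
      nlinarith [mul_nonneg hαinv.le hsum_nonneg]
    · push_neg at hcase
      have h1 : (1/(T:ℝ)) ≤ 1/α := one_div_le_one_div_of_le hα0 hαT
      have h2 : (1/(T:ℝ)) * ((∑ t, ℓ t) - (T:ℝ)*b) ≤ (1/α) * ((∑ t, ℓ t) - (T:ℝ)*b) :=
        mul_le_mul_of_nonneg_right h1 hcase.le
      have h3 : (1/α) * ((∑ t, ℓ t) - (T:ℝ)*b) ≤ (1/α) * ∑ t, max 0 (ℓ t - b) :=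
        mul_le_mul_of_nonneg_left hsum_ge hαinv.le
      have h4 : (1/(T:ℝ)) * ((∑ t, ℓ t) - (T:ℝ)*b) = (1/T:ℝ) * ∑ t, ℓ t - b := by
        field_simp
      linarith
  have hne : S.Nonempty := ⟨0 + (1/α) * ∑ t, max 0 (ℓ t - 0), 0, le_refl 0, rfl⟩
  have hbdd : BddBelow S := ⟨(1 / T : ℝ) * ∑ t, ℓ t, hlow⟩
  constructor
  · exact le_csInf hne hlow
  · set M := Finset.univ.sup' ⟨⟨0, hT⟩, Finset.mem_univ _⟩ ℓ with hM
    have hM0 : 0 ≤ M := le_trans (hℓ ⟨0, hT⟩) (Finset.le_sup' ℓ (Finset.mem_univ _))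
    have hmem : M ∈ S := by
      refine ⟨M, hM0, ?_⟩
      have : ∑ t, max 0 (ℓ t - M) = 0 := Finset.sum_eq_zero fun t _ =>
        max_eq_left (sub_nonpos.mpr (Finset.le_sup' ℓ (Finset.mem_univ t)))
      rw [this]; ring
    exact csInf_le hbdd hmem
end
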